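/- For the restricted Kerr metric, on the horizon ellipse S^± = ρ²/(r_±²+a²) + z²/r_±² - 1 = 0 (with r_± satisfying r_±² - 2mr_± + a² = 0), the surface is characteristic: g^{ρρ}(S^±_ρ)² + 2g^{ρz}S^±_ρ S^±_z + g^{zz}(S^±_z)² = 0, where g^{ρρ} = -1 + Kb_ρ², g^{zz} = -1 + Kb_z², g^{ρz} = Kb_ρb_z, K = 2mr³/(r⁴ + a²z²), b_ρ = ρr/(r²+a²) [with r = r_± on the ellipse], b_z = z/r. -/

import Mathlib

/-!
On the horizon the vector `b = (b_ρ, b_z)` is `r/2` times the normal `S = ∇S^±`, so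
`g^{-1} = -I + K b bᵀ` evaluates on `S` to `(K (r/2)² |S|² - 1) |S|²`. The ellipse equation
gives `|S|² = 4 (r⁴ + a²z²) / (r⁴ (r² + a²))`, and the horizon equation `2mr = r² + a²`
turns `K` into `r² (r² + a²) / (r⁴ + a²z²)`, so `K (r/2)² |S|² = 1`.
-/

theorem quadForm_neg_one_add_rankOne (K c s t : ℝ) :
    (-1 + K * (c * s) ^ 2) * s ^ 2 + 2 * (K * (c * s) * (c * t)) * s * t
        + (-1 + K * (c * t) ^ 2) * t ^ 2
      = (K * c ^ 2 * (s ^ 2 + t ^ 2) - 1) * (s ^ 2 + t ^ 2) := by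
  ring

theorem ellipse_gradient_sq {a r ρ z : ℝ} (hr : r ≠ 0)
    (hellipse : ρ ^ 2 / (r ^ 2 + a ^ 2) + z ^ 2 / r ^ 2 = 1) :
    (2 * ρ / (r ^ 2 + a ^ 2)) ^ 2 + (2 * z / r ^ 2) ^ 2
      = 4 * (r ^ 4 + a ^ 2 * z ^ 2) / (r ^ 4 * (r ^ 2 + a ^ 2)) := by
  have hA : r ^ 2 + a ^ 2 ≠ 0 := by positivity
  field_simp at hellipse ⊢
  linear_combination 4 * r ^ 2 * hellipse

theorem kerr_K_eq_of_horizon {m a r z : ℝ}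
    (hroot : r ^ 2 - 2 * m * r + a ^ 2 = 0) :
    2 * m * r ^ 3 / (r ^ 4 + a ^ 2 * z ^ 2) = r ^ 2 * (r ^ 2 + a ^ 2) / (r ^ 4 + a ^ 2 * z ^ 2) := by
  congr 1
  linear_combination -r ^ 2 * hroot

theorem stmt14_general (m a r ρ z : ℝ) (hrpos : 0 < r)
    (hroot : r^2 - 2*m*r + a^2 = 0)
    (hellipse : ρ^2/(r^2+a^2) + z^2/r^2 = 1)
    (K bρ bz grr gzz grz Sρ Sz : ℝ)
    (hK : K = 2*m*r^3/(r^4 + a^2*z^2))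
    (hbρ : bρ = ρ*r/(r^2+a^2)) (hbz : bz = z/r)
    (hgrr : grr = -1 + K*bρ^2) (hgzz : gzz = -1 + K*bz^2) (hgrz : grz = K*bρ*bz)
    (hSρ : Sρ = 2*ρ/(r^2+a^2)) (hSz : Sz = 2*z/r^2) :
    grr*Sρ^2 + 2*grz*Sρ*Sz + gzz*Sz^2 = 0 := by
  have hr : r ≠ 0 := hrpos.ne'
  have hbρ' : bρ = r / 2 * Sρ := by rw [hbρ, hSρ]; ring
  have hbz' : bz = r / 2 * Sz := by rw [hbz, hSz]; field_simp
  have hnormal : K * (r / 2) ^ 2 * (Sρ ^ 2 + Sz ^ 2) = 1 := by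
    have hA : r ^ 2 + a ^ 2 ≠ 0 := by positivity
    have hD : r ^ 4 + a ^ 2 * z ^ 2 ≠ 0 := by positivity
    rw [hK, kerr_K_eq_of_horizon hroot, hSρ, hSz, ellipse_gradient_sq hr hellipse]
    field_simp
    norm_num
  rw [hgrr, hgzz, hgrz, hbρ', hbz', quadForm_neg_one_add_rankOne, hnormal]
  ring

/-- For the restricted Kerr metric, on the horizon ellipse
`ρ²/(r²+a²) + z²/r² = 1` with `r² - 2mr + a² = 0`, the surface is
characteristic: `g^{ρρ}Sρ² + 2g^{ρz}SρSz + g^{zz}Sz² = 0`. -/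
theorem stmt14 (m a r ρ z : ℝ) (ha : 0 < a) (ham : a ≤ m) (hrpos : 0 < r)
    (hroot : r^2 - 2*m*r + a^2 = 0)
    (hellipse : ρ^2/(r^2+a^2) + z^2/r^2 = 1)
    (K bρ bz grr gzz grz Sρ Sz : ℝ)
    (hK : K = 2*m*r^3/(r^4 + a^2*z^2))
    (hbρ : bρ = ρ*r/(r^2+a^2)) (hbz : bz = z/r)
    (hgrr : grr = -1 + K*bρ^2) (hgzz : gzz = -1 + K*bz^2) (hgrz : grz = K*bρ*bz)
    (hSρ : Sρ = 2*ρ/(r^2+a^2)) (hSz : Sz = 2*z/r^2) :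
    grr*Sρ^2 + 2*grz*Sρ*Sz + gzz*Sz^2 = 0 :=
  stmt14_general m a r ρ z hrpos hroot hellipse K bρ bz grr gzz grz Sρ Sz hK hbρ hbz hgrr hgzz hgrz
    hSρ hSz
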